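/- For every quantitative definite clause program P, the minimal model A (the pointwise supremum of the P-chain) is a fixpoint of the immediate consequence operator: for every atom a, A a = sup{ f * min{A b₁, …, A b_k} : (a, [b₁,…,b_k], f) is a clause of P with head a } (where min over an empty body is 1 and sup over the empty set is 0). -/
import Mathlib


/-- A quantitative definite clause: a head atom, a list of body atoms,
and a numerical factor. -/
structure QClause (α : Type*) where
  head : α
  body : List α
  factor : ℝ

variable {α : Type*}

/-- The minimum of the values of an interpretation over a list of atoms,
with the empty list yielding 1. -/
def bodyMin (I : α → ℝ) (l : List α) : ℝ := (l.map I).foldr min 1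

/-- A quantitative definite clause program: a finite set of clauses whose
factors lie in (0,1]. -/
def QProgram (P : Set (QClause α)) : Prop :=
  P.Finite ∧ ∀ c ∈ P, 0 < c.factor ∧ c.factor ≤ 1

/-- An interpretation assigns to each atom a value in [0,1]. -/
def IsInterp (I : α → ℝ) : Prop := ∀ a, 0 ≤ I a ∧ I a ≤ 1

/-- An interpretation is a model of `P` iff it is an interpretation and for
every clause `(h, [b₁,…,b_k], f)` of `P`, `I h ≥ f * min {I b₁, …, I b_k}`. -/
def IsModel (P : Set (QClause α)) (I : α → ℝ) : Prop :=
  IsInterp I ∧ ∀ c ∈ P, c.factor * bodyMin I c.body ≤ I c.head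

/-- The `P`-chain: `A₀ a = 0` and
`A_{i+1} a = sup { f * min {A_i b₁, …, A_i b_k} : (a,[b₁,…,b_k],f) ∈ P }`
(in ℝ, `sSup ∅ = 0`). -/
noncomputable def chain (P : Set (QClause α)) : ℕ → α → ℝ
  | 0, _ => 0
  | i + 1, a =>
      sSup {x | ∃ c ∈ P, c.head = a ∧ x = c.factor * bodyMin (chain P i) c.body}

section Aux

variable {α : Type*}

lemma bodyMin_le_one (I : α → ℝ) (l : List α) : bodyMin I l ≤ 1 := by
  induction l with
  | nil => simp [bodyMin]
  | cons b l ih => simpa [bodyMin] using Or.inr (by simpa [bodyMin] using ih)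

lemma bodyMin_nonneg {I : α → ℝ} (hI : ∀ b, 0 ≤ I b) (l : List α) : 0 ≤ bodyMin I l := by
  induction l with
  | nil => simp [bodyMin]
  | cons b l ih => exact le_min (hI b) (by simpa [bodyMin] using ih)

lemma bodyMin_mono {I J : α → ℝ} (h : ∀ b, I b ≤ J b) (l : List α) :
    bodyMin I l ≤ bodyMin J l := by
  induction l with
  | nil => simp [bodyMin]
  | cons b l ih => exact min_le_min (h b) (by simpa [bodyMin] using ih)

lemma chainSet_finite {P : Set (QClause α)} (hP : QProgram P) (I : α → ℝ) (a : α) :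
    {x | ∃ c ∈ P, c.head = a ∧ x = c.factor * bodyMin I c.body}.Finite := by
  apply Set.Finite.subset (hP.1.image (fun c => c.factor * bodyMin I c.body))
  rintro x ⟨c, hc, _, rfl⟩
  exact ⟨c, hc, rfl⟩

lemma chain_nonneg {P : Set (QClause α)} (hP : QProgram P) (i : ℕ) (a : α) :
    0 ≤ chain P i a := by
  induction i generalizing a with
  | zero => simp [chain]
  | succ i ih =>
    exact Real.sSup_nonneg (by
      rintro x ⟨c, hc, _, rfl⟩
      exact mul_nonneg (hP.2 c hc).1.le (bodyMin_nonneg ih _))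

lemma chain_le_one {P : Set (QClause α)} (hP : QProgram P) (i : ℕ) (a : α) :
    chain P i a ≤ 1 := by
  cases i with
  | zero => simp [chain]
  | succ i =>
    apply Real.sSup_le _ zero_le_one
    rintro x ⟨c, hc, _, rfl⟩
    calc c.factor * bodyMin (chain P i) c.body
        ≤ 1 * 1 := mul_le_mul (hP.2 c hc).2 (bodyMin_le_one _ _)
            (bodyMin_nonneg (chain_nonneg hP i) _) zero_le_one
      _ = 1 := one_mul 1

lemma chain_mono {P : Set (QClause α)} (hP : QProgram P) (i : ℕ) (a : α) :
    chain P i a ≤ chain P (i + 1) a := by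
  induction i generalizing a with
  | zero =>
    simp only [chain]
    exact Real.sSup_nonneg (by
      rintro x ⟨c, hc, _, rfl⟩
      exact mul_nonneg (hP.2 c hc).1.le (bodyMin_nonneg (chain_nonneg hP 0) _))
  | succ i ih =>
    apply Real.sSup_le _ (Real.sSup_nonneg (by
      rintro x ⟨c, hc, _, rfl⟩
      exact mul_nonneg (hP.2 c hc).1.le (bodyMin_nonneg (chain_nonneg hP (i+1)) _)))
    rintro x ⟨c, hc, hhead, rfl⟩
    calc c.factor * bodyMin (chain P i) c.body
        ≤ c.factor * bodyMin (chain P (i+1)) c.body :=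
          mul_le_mul_of_nonneg_left (bodyMin_mono ih _) (hP.2 c hc).1.le
      _ ≤ _ := le_csSup ((chainSet_finite hP _ a).bddAbove) ⟨c, hc, hhead, rfl⟩

lemma chain_mono' {P : Set (QClause α)} (hP : QProgram P) : ∀ {i j : ℕ}, i ≤ j →
    ∀ a, chain P i a ≤ chain P j a := by
  intro i j hij
  induction hij with
  | refl => exact fun a => le_rfl
  | step h ih => exact fun a => (ih a).trans (chain_mono hP _ a)

lemma chain_bddAbove {P : Set (QClause α)} (hP : QProgram P) (a : α) :
    BddAbove (Set.range fun i => chain P i a) :=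
  ⟨1, by rintro x ⟨i, rfl⟩; exact chain_le_one hP i a⟩

/-- sup of min of two monotone bounded sequences. -/
lemma min_ciSup {f g : ℕ → ℝ} (hf : Monotone f) (hg : Monotone g)
    (hbf : BddAbove (Set.range f)) (hbg : BddAbove (Set.range g)) :
    min (⨆ i, f i) (⨆ i, g i) = ⨆ i, min (f i) (g i) := by
  have hb : BddAbove (Set.range fun i => min (f i) (g i)) := by
    obtain ⟨M, hM⟩ := hbf
    exact ⟨M, by rintro x ⟨i, rfl⟩; exact (min_le_left _ _).trans (hM ⟨i, rfl⟩)⟩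
  apply le_antisymm
  · by_contra h
    push_neg at h
    have h1 : (⨆ i, min (f i) (g i)) < ⨆ i, f i := lt_of_lt_of_le h (min_le_left _ _)
    have h2 : (⨆ i, min (f i) (g i)) < ⨆ i, g i := lt_of_lt_of_le h (min_le_right _ _)
    obtain ⟨i, hi⟩ := (lt_ciSup_iff hbf).mp h1
    obtain ⟨j, hj⟩ := (lt_ciSup_iff hbg).mp h2
    have : (⨆ i, min (f i) (g i)) < min (f (max i j)) (g (max i j)) :=
      lt_min (lt_of_lt_of_le hi (hf (le_max_left i j)))
        (lt_of_lt_of_le hj (hg (le_max_right i j)))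
    exact absurd (le_ciSup hb (max i j)) (not_le.mpr this)
  · exact ciSup_le fun i => min_le_min (le_ciSup hbf i) (le_ciSup hbg i)

lemma bodyMin_ciSup {P : Set (QClause α)} (hP : QProgram P) (l : List α) :
    bodyMin (fun b => ⨆ i : ℕ, chain P i b) l = ⨆ i : ℕ, bodyMin (chain P i) l := by
  induction l with
  | nil => simp [bodyMin, ciSup_const]
  | cons b l ih =>
    have hmono : Monotone fun i => bodyMin (chain P i) l :=
      monotone_nat_of_le_succ fun i => bodyMin_mono (chain_mono hP i) l
    have hbdd : BddAbove (Set.range fun i => bodyMin (chain P i) l) :=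
      ⟨1, by rintro x ⟨i, rfl⟩; exact bodyMin_le_one _ _⟩
    show min _ (bodyMin _ l) = ⨆ i, min (chain P i b) (bodyMin (chain P i) l)
    rw [ih]
    exact min_ciSup (monotone_nat_of_le_succ fun i => chain_mono hP i b) hmono
      (chain_bddAbove hP b) hbdd

end Aux

/-- The minimal model is a fixpoint of the immediate consequence operator. -/
theorem stmt_12 (P : Set (QClause α)) (hP : QProgram P) (a : α) :
    (⨆ i : ℕ, chain P i a) =
      sSup {x | ∃ c ∈ P, c.head = a ∧
        x = c.factor * bodyMin (fun b => ⨆ i : ℕ, chain P i b) c.body} := by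
  set A : α → ℝ := fun b => ⨆ i : ℕ, chain P i b with hA
  have hAnonneg : ∀ b, 0 ≤ A b := fun b =>
    le_trans (chain_nonneg hP 0 b) (le_ciSup (chain_bddAbove hP b) 0)
  have hTfin := chainSet_finite hP A a
  have hTnonneg : ∀ x ∈ {x | ∃ c ∈ P, c.head = a ∧ x = c.factor * bodyMin A c.body},
      0 ≤ x := by
    rintro x ⟨c, hc, _, rfl⟩
    exact mul_nonneg (hP.2 c hc).1.le (bodyMin_nonneg hAnonneg _)
  apply le_antisymm
  · apply ciSup_le
    intro i
    cases i with
    | zero => exact le_trans (by simp [chain]) (Real.sSup_nonneg hTnonneg)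
    | succ i =>
      apply Real.sSup_le _ (Real.sSup_nonneg hTnonneg)
      rintro x ⟨c, hc, hhead, rfl⟩
      calc c.factor * bodyMin (chain P i) c.body
          ≤ c.factor * bodyMin A c.body :=
            mul_le_mul_of_nonneg_left
              (bodyMin_mono (fun b => le_ciSup (chain_bddAbove hP b) i) _)
              (hP.2 c hc).1.le
        _ ≤ _ := le_csSup hTfin.bddAbove ⟨c, hc, hhead, rfl⟩
  · apply Real.sSup_le _ (le_trans (chain_nonneg hP 0 a) (le_ciSup (chain_bddAbove hP a) 0))
    rintro x ⟨c, hc, hhead, rfl⟩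
    rw [hA, bodyMin_ciSup hP, Real.mul_iSup_of_nonneg (hP.2 c hc).1.le]
    apply ciSup_le
    intro i
    have hmem : c.factor * bodyMin (chain P i) c.body ∈
        {x | ∃ c' ∈ P, c'.head = a ∧ x = c'.factor * bodyMin (chain P i) c'.body} :=
      ⟨c, hc, hhead, rfl⟩
    calc c.factor * bodyMin (chain P i) c.body
        ≤ chain P (i + 1) a := le_csSup (chainSet_finite hP _ a).bddAbove hmem
      _ ≤ A a := le_ciSup (chain_bddAbove hP a) (i + 1)
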